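/- arXiv:1910.07473 — 2 statements merged into one kernel-verified Lean document; each statement's English description precedes it below -/
import Mathlib

section
/- Let N be a positive integer and let (α_n : n ∈ ℤ), (β_n : n ∈ ℤ) be N-periodic real sequences with α_n > 0. Suppose (a_n : n ≥ 0) and (b_n : n ≥ 0) are sequences with a_n > 0 and b_n ∈ ℝ for every n satisfying: a_n/|a_n| → γ for some γ ∈ ℂ with |γ| = 1; (a_{n−1}/a_n), (b_n/a_n), (γ/a_n) ∈ D̃₁^N(ℂ); |a_n| → ∞; a_{n−1}/a_n − α_{n−1}/α_n → 0; b_n/a_n − β_n/α_n → 0. Let (x_n : n ≥ 0) and (y_n : n ≥ 0) be real sequences with ∑_{n≥0} |x_{n+N}/a_{n+N} − x_n/a_n| + ∑_{n≥0} |y_{n+N}/a_{n+N} − y_n/a_n| < ∞ and x_n/a_n → 0, y_n/a_n → 0. Define ã_n = a_n + i·ε_n·x_n and b̃_n = b_n + i·ε_n·y_n, where ε_n = (−1)^{⌊n/N⌋} and i is the imaginary unit. Then (ã_n), (b̃_n) satisfy the same conditions with the same α, β and γ: ã_n/|ã_n| → γ; (ã_{n−1}/ã_n), (b̃_n/ã_n),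 (γ/ã_n) ∈ D̃₁^N(ℂ); |ã_n| → ∞; ã_{n−1}/ã_n − α_{n−1}/α_n → 0; and b̃_n/ã_n − β_n/α_n → 0. -/
open Filter Matrix Topology

noncomputable section

/-- The operator norm of a 2×2 complex matrix (as operator on Euclidean ℂ²). -/
noncomputable def opNorm (X : Matrix (Fin 2) (Fin 2) ℂ) : ℝ :=
  ‖Matrix.toEuclideanCLM (𝕜 := ℂ) X‖

/-- Entrywise complex conjugation of a matrix. -/
def mconj (X : Matrix (Fin 2) (Fin 2) ℂ) : Matrix (Fin 2) (Fin 2) ℂ :=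
  X.map (starRingEnd ℂ)

/-- Hermitian symmetrisation. -/
def symQ (X : Matrix (Fin 2) (Fin 2) ℂ) : Matrix (Fin 2) (Fin 2) ℂ :=
  (2⁻¹ : ℂ) • (X + Xᴴ)

def Ematrix : Matrix (Fin 2) (Fin 2) ℂ := !![0, -1; 1, 0]

/-- One-step transfer matrix `B_j(z)`. -/
def Bmat (a b : ℕ → ℂ) (j : ℕ) (z : ℂ) : Matrix (Fin 2) (Fin 2) ℂ :=
  !![0, 1; -(a (j-1) / a j), (z - b j) / a j]

/-- `N`-step transfer matrix `X_n(z) = B_{n+N-1}(z) ⋯ B_n(z)`. -/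
def transfer (a b : ℕ → ℂ) (N n : ℕ) (z : ℂ) : Matrix (Fin 2) (Fin 2) ℂ :=
  (((List.range N).map fun j => Bmat a b (n + j) z).reverse).prod

/-- Generalised eigenvector associated with `z`. -/
def IsGenEigen (a b : ℕ → ℂ) (z : ℂ) (u : ℕ → ℂ) : Prop :=
  ¬(u 0 = 0 ∧ u 1 = 0) ∧
    ∀ n, 1 ≤ n → z * u n = a n * u (n+1) + b n * u n + a (n-1) * u (n-1)

/-- The twisted Stolz class `D̃₁(K, GL(2,ℂ))`. -/
def MemD1K (K : Set ℂ) (Y : ℕ → ℂ → Matrix (Fin 2) (Fin 2) ℂ) : Prop :=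
  (∀ n, 1 ≤ n → ContinuousOn (Y n) K) ∧
  (∀ n, 1 ≤ n → ∀ z ∈ K, IsUnit (Y n z)) ∧
  (∃ C : ℝ, ∀ n, 1 ≤ n → ∀ z ∈ K, opNorm (Y n z) ≤ C) ∧
  (∃ g : ℕ → ℝ, Summable g ∧ ∀ n, 1 ≤ n → ∀ z ∈ K,
      opNorm (Y (n+1) z - mconj (Y n z)) ≤ g n)

/-- The twisted Stolz class `D̃₁(ℂ)` for scalar sequences `(x_n : n ≥ 1)`. -/
def MemD1 (x : ℕ → ℂ) : Prop :=
  (∃ C : ℝ, ∀ n, 1 ≤ n → ‖x n‖ ≤ C) ∧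
    Summable (fun n : ℕ => ‖x (n+2) - (starRingEnd ℂ) (x (n+1))‖)

def MemD1N (N : ℕ) (x : ℕ → ℂ) : Prop := ∀ i < N, MemD1 (fun n => x (n*N+i))

/-- The quadratic form `v ↦ ⟨M v, v⟩`. -/
def Qform (M : Matrix (Fin 2) (Fin 2) ℂ) (v : Fin 2 → ℂ) : ℂ :=
  dotProduct (star v) (M.mulVec v)

def Qgam (a b : ℕ → ℂ) (N : ℕ) (γ : ℂ) (n : ℕ) (z : ℂ) (v : Fin 2 → ℂ) : ℂ :=
  Qform (symQ ((a (n+N-1) / (γ * (‖a (n+N-1)‖ : ℂ))) • (Ematrix * transfer a b N n z))) v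

def Qtil (a b : ℕ → ℂ) (N : ℕ) (γ : ℂ) (n : ℕ) (z : ℂ) (v : Fin 2 → ℂ) : ℂ :=
  Qform (symQ ((a (n+N-1) / (γ * (‖a (n+N-1)‖ : ℂ)) *
      (starRingEnd ℂ) (a (n+N-1) / a (n-1))) • (Ematrix * mconj (transfer a b N n z)))) v

/-- The `N`-shifted Turán determinant, expressed via a generalised eigenvector `u`. -/
def Sdet (a b : ℕ → ℂ) (N : ℕ) (γ : ℂ) (z : ℂ) (u : ℕ → ℂ) (n : ℕ) : ℂ :=
  (‖a (n+N-1)‖ : ℂ) * Qgam a b N γ n z ![u (n-1), u n]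

/-- Uniform non-degeneracy of a family of quadratic forms. -/
def UnifNonDeg (K : Set ℂ) (Q : ℕ → ℂ → (Fin 2 → ℂ) → ℂ) : Prop :=
  ∃ c₁ > (0:ℝ), ∃ c₂ > (0:ℝ), ∃ M : ℕ, 1 ≤ M ∧
    ∀ v : Fin 2 → ℂ, ∀ z ∈ K, ∀ n, M ≤ n →
      c₁ * (‖v 0‖^2 + ‖v 1‖^2) ≤ ‖Q n z v‖ ∧ ‖Q n z v‖ ≤ c₂ * (‖v 0‖^2 + ‖v 1‖^2)

def RealEntries (X : Matrix (Fin 2) (Fin 2) ℂ) : Prop := ∀ p q, (X p q).im = 0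

def discr (X : Matrix (Fin 2) (Fin 2) ℂ) : ℂ := (Matrix.trace X)^2 - 4 * X.det

/-- Periodic one-step matrix `𝔅_j(x)` (real). -/
def pB (α β : ℤ → ℝ) (j : ℤ) (x : ℝ) : Matrix (Fin 2) (Fin 2) ℝ :=
  !![0, 1; -(α (j-1) / α j), (x - β j) / α j]

/-- Periodic transfer matrix `𝔛_i(x) = 𝔅_{i+N-1}(x) ⋯ 𝔅_i(x)`. -/
def pX (α β : ℤ → ℝ) (N : ℕ) (i : ℤ) (x : ℝ) : Matrix (Fin 2) (Fin 2) ℝ :=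
  (((List.range N).map fun j => pB α β (i + j) x).reverse).prod

/-- The generalised eigenvector with initial data `α`. -/
def gev (a b : ℕ → ℂ) (z : ℂ) (α : Fin 2 → ℂ) : ℕ → ℂ
  | 0 => α 0
  | 1 => α 1
  | n+2 => ((z - b (n+1)) * gev a b z α (n+1) - a n * gev a b z α n) / a (n+1)

end

/-!
Write `ã_n = a_n c_n` with `c_n = 1 + i ε_n x_n / a_n`. As `x_n / a_n` is real, `|c_n| ≥ 1` and
`c_n → 1`; as `ε_{n+N} = -ε_n`, `c_{n+N} - conj c_n = i ε_{n+N} (x_{n+N}/a_{n+N} - x_n/a_n)` is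
summable, so `c` and its shift by one index belong to `D̃₁^N`. The same holds for
`b̃_n / a_n = b_n / a_n + i ε_n y_n / a_n`, and `D̃₁^N` is closed under sums, products and
division by sequences bounded away from `0`. The limits follow from `c_n → 1` because the
`N`-periodic ratios `α_{n-1}/α_n` and `β_n/α_n` are bounded.
-/

open Complex ComplexConjugate

lemma MemD1.add {x y : ℕ → ℂ} (hx : MemD1 x) (hy : MemD1 y) : MemD1 (fun n => x n + y n) := by
  obtain ⟨⟨Cx, hCx⟩, hx⟩ := hx
  obtain ⟨⟨Cy, hCy⟩, hy⟩ := hy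
  refine ⟨⟨Cx + Cy, fun n hn =>
    (norm_add_le _ _).trans (add_le_add (hCx n hn) (hCy n hn))⟩, ?_⟩
  refine Summable.of_nonneg_of_le (fun _ => norm_nonneg _) (fun n => ?_) (hx.add hy)
  calc _ = ‖(x (n + 2) - conj (x (n + 1))) + (y (n + 2) - conj (y (n + 1)))‖ := by
        rw [map_add, add_sub_add_comm]
    _ ≤ _ := norm_add_le _ _

lemma MemD1.mul {x y : ℕ → ℂ} (hx : MemD1 x) (hy : MemD1 y) : MemD1 (fun n => x n * y n) := by
  obtain ⟨⟨Cx, hCx⟩, hx⟩ := hx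
  obtain ⟨⟨Cy, hCy⟩, hy⟩ := hy
  have hCx0 : 0 ≤ Cx := (norm_nonneg _).trans (hCx 1 le_rfl)
  refine ⟨⟨Cx * Cy, fun n hn => ?_⟩, ?_⟩
  · rw [norm_mul]
    exact mul_le_mul (hCx n hn) (hCy n hn) (norm_nonneg _) hCx0
  refine Summable.of_nonneg_of_le (fun _ => norm_nonneg _) (fun n => ?_)
    ((hx.mul_right Cy).add (hy.mul_left Cx))
  have hx1 : ‖conj (x (n + 1))‖ ≤ Cx := by rw [RCLike.norm_conj]; exact hCx _ (by omega)
  calc _ = ‖(x (n + 2) - conj (x (n + 1))) * y (n + 2)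
            + conj (x (n + 1)) * (y (n + 2) - conj (y (n + 1)))‖ := by
        rw [map_mul]; congr 1; ring
    _ ≤ ‖x (n + 2) - conj (x (n + 1))‖ * Cy + Cx * ‖y (n + 2) - conj (y (n + 1))‖ := by
        refine (norm_add_le _ _).trans (add_le_add ?_ ?_) <;> rw [norm_mul]
        · exact mul_le_mul_of_nonneg_left (hCy _ (by omega)) (norm_nonneg _)
        · exact mul_le_mul_of_nonneg_right hx1 (norm_nonneg _)

lemma MemD1.inv {x : ℕ → ℂ} {δ : ℝ} (hx : MemD1 x) (hδ : 0 < δ)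
    (hxδ : ∀ n, 1 ≤ n → δ ≤ ‖x n‖) : MemD1 (fun n => (x n)⁻¹) := by
  obtain ⟨-, hx⟩ := hx
  have hinv : ∀ n, 1 ≤ n → ‖(x n)⁻¹‖ ≤ δ⁻¹ := fun n hn => by
    rw [norm_inv]; exact inv_anti₀ hδ (hxδ n hn)
  refine ⟨⟨δ⁻¹, hinv⟩, ?_⟩
  refine Summable.of_nonneg_of_le (fun _ => norm_nonneg _) (fun n => ?_)
    (hx.mul_right (δ⁻¹ * δ⁻¹))
  have h2 : x (n + 2) ≠ 0 := norm_pos_iff.1 (hδ.trans_le (hxδ _ (by omega)))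
  have h1 : conj (x (n + 1)) ≠ 0 :=
    (map_ne_zero _).2 (norm_pos_iff.1 (hδ.trans_le (hxδ _ (by omega))))
  have hconj : ‖(conj (x (n + 1)))⁻¹‖ ≤ δ⁻¹ := by
    rw [norm_inv, RCLike.norm_conj, ← norm_inv]; exact hinv _ (by omega)
  calc _ = ‖(conj (x (n + 1)) - x (n + 2)) * ((x (n + 2))⁻¹ * (conj (x (n + 1)))⁻¹)‖ := by
        rw [map_inv₀]; congr 1; field_simp
    _ ≤ ‖x (n + 2) - conj (x (n + 1))‖ * (δ⁻¹ * δ⁻¹) := by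
        rw [norm_mul, norm_sub_rev, norm_mul]
        gcongr
        exact hinv _ (by omega)

lemma MemD1N.add {N : ℕ} {x y : ℕ → ℂ} (hx : MemD1N N x) (hy : MemD1N N y) :
    MemD1N N (fun n => x n + y n) := fun i hi => (hx i hi).add (hy i hi)

lemma MemD1N.mul {N : ℕ} {x y : ℕ → ℂ} (hx : MemD1N N x) (hy : MemD1N N y) :
    MemD1N N (fun n => x n * y n) := fun i hi => (hx i hi).mul (hy i hi)

lemma MemD1N.div {N : ℕ} {x y : ℕ → ℂ} {δ : ℝ} (hx : MemD1N N x) (hy : MemD1N N y)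
    (hδ : 0 < δ) (hyδ : ∀ n, δ ≤ ‖y n‖) : MemD1N N (fun n => x n / y n) := fun i hi => by
  simpa only [div_eq_mul_inv] using (hx i hi).mul ((hy i hi).inv hδ fun _ _ => hyδ _)

-- Unlike `MemD1N N c`, this is stable under shifting the index by one (`memD1N_sub_one`).
def MemD1Stride (N : ℕ) (c : ℕ → ℂ) : Prop :=
  BddAbove (Set.range fun n => ‖c n‖) ∧ Summable fun n => ‖c (n + N) - conj (c n)‖

namespace MemD1Stride

variable {N : ℕ} {c : ℕ → ℂ}

lemma memD1_comp (hN : 0 < N) (hc : MemD1Stride N c) {j : ℕ → ℕ}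
    (hj : ∀ n, 1 ≤ n → j (n + 1) = j n + N) : MemD1 (fun n => c (j n)) := by
  obtain ⟨⟨C, hC⟩, hsum⟩ := hc
  have hmono : StrictMono fun n => j (n + 1) :=
    strictMono_nat_of_lt_succ fun n => by rw [hj (n + 1) (by omega)]; omega
  refine ⟨⟨C, fun n _ => hC ⟨j n, rfl⟩⟩,
    (hsum.comp_injective hmono.injective).congr fun n => ?_⟩
  simp only [Function.comp_apply, hj (n + 1) (by omega)]

lemma memD1N (hN : 0 < N) (hc : MemD1Stride N c) : MemD1N N c :=
  fun _ _ => hc.memD1_comp hN fun _ _ => by ring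

lemma memD1N_sub_one (hN : 0 < N) (hc : MemD1Stride N c) : MemD1N N (fun n => c (n - 1)) :=
  fun i _ => hc.memD1_comp hN fun n hn => by
    have : N ≤ n * N := Nat.le_mul_of_pos_left N hn
    rw [add_mul, one_mul]
    omega

lemma one_add (hc : MemD1Stride N c) : MemD1Stride N (fun n => 1 + c n) := by
  obtain ⟨⟨C, hC⟩, hsum⟩ := hc
  refine ⟨⟨1 + C, ?_⟩, hsum.congr fun n => ?_⟩
  · rintro _ ⟨n, rfl⟩
    exact (norm_add_le _ _).trans (by simpa using hC ⟨n, rfl⟩)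
  · rw [map_add, map_one, add_sub_add_left_eq_sub]

end MemD1Stride

lemma memD1Stride_I_mul_neg_one_pow_mul {N : ℕ} (hN : 0 < N) {r : ℕ → ℂ}
    (hr : ∀ n, conj (r n) = r n) (hbdd : BddAbove (Set.range fun n => ‖r n‖))
    (hsum : Summable fun n => ‖r (n + N) - r n‖) :
    MemD1Stride N (fun n => I * (-1) ^ (n / N) * r n) := by
  refine ⟨by simpa using hbdd, hsum.congr fun n => ?_⟩
  beta_reduce
  rw [Nat.add_div_right n hN, map_mul, map_mul, hr, conj_I, map_pow, map_neg, map_one,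
    show I * (-1) ^ (n / N + 1) * r (n + N) - -I * (-1) ^ (n / N) * r n
      = -(I * (-1) ^ (n / N)) * (r (n + N) - r n) by ring, norm_mul]
  simp

lemma one_le_norm_one_add_I_mul_neg_one_pow_mul {r : ℂ} (hr : conj r = r) (k : ℕ) :
    1 ≤ ‖1 + I * (-1) ^ k * r‖ := by
  have him : ((-1 : ℂ) ^ k * r).im = 0 := by
    rw [← ofReal_one, ← ofReal_neg, ← ofReal_pow, im_ofReal_mul, conj_eq_iff_im.1 hr, mul_zero]
  have hre : (1 + I * (-1) ^ k * r).re = 1 := by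
    rw [mul_assoc, add_re, one_re, I_mul_re, him, neg_zero, add_zero]
  exact hre ▸ Complex.re_le_norm _

lemma tendsto_I_mul_neg_one_pow_mul {ι : Type*} {l : Filter ι} {r : ι → ℂ}
    (hr : Tendsto r l (𝓝 0)) (e : ι → ℕ) :
    Tendsto (fun n => I * (-1) ^ e n * r n) l (𝓝 0) :=
  tendsto_zero_iff_norm_tendsto_zero.2 (by simpa using hr.norm)

lemma Function.Periodic.exists_norm_le {E : Type*} [SeminormedAddGroup E] {f : ℤ → E}
    {c : ℤ} (hf : Function.Periodic f c) (hc : 0 < c) : ∃ C, ∀ n, ‖f n‖ ≤ C := by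
  obtain ⟨C, hC⟩ := ((Set.finite_Ico 0 c).image fun n => ‖f n‖).bddAbove
  refine ⟨C, fun n => ?_⟩
  obtain ⟨m, hm, hfm⟩ := hf.exists_mem_Ico₀ hc n
  exact hfm ▸ hC ⟨m, hm, rfl⟩

lemma tendsto_mul_sub_of_tendsto_sub {ι R : Type*} [NormedRing R] {l : Filter ι}
    {u v q : ι → R} (huv : Tendsto (fun n => u n - v n) l (𝓝 0)) (hv : ∃ C, ∀ n, ‖v n‖ ≤ C)
    (hq : Tendsto q l (𝓝 1)) : Tendsto (fun n => u n * q n - v n) l (𝓝 0) := by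
  have h1 : Tendsto (fun n => (u n - v n) * q n) l (𝓝 0) := by simpa using huv.mul hq
  have h2 : Tendsto (fun n => v n * (q n - 1)) l (𝓝 0) :=
    isBoundedUnder_le_mul_tendsto_zero (isBoundedUnder_of hv) (by simpa using hq.sub_const 1)
  simpa using (h1.add h2).congr fun n => by noncomm_ring

open Filter Matrix Topology in
theorem statement16_general
    (N : ℕ) (hN : 1 ≤ N) (γ : ℂ)
    (α β : ℤ → ℝ) (hαper : ∀ n, α (n+N) = α n) (hβper : ∀ n, β (n+N) = β n)
    (a b : ℕ → ℂ)
    (haRe : ∀ n, (a n).im = 0 ∧ 0 < (a n).re)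
    (hγlim : Tendsto (fun n : ℕ => a n / (‖a n‖ : ℂ)) atTop (𝓝 γ))
    (hD1a : MemD1N N (fun n => a (n-1) / a n))
    (hD1b : MemD1N N (fun n => b n / a n))
    (hD1g : MemD1N N (fun n => γ / a n))
    (hainf : Tendsto (fun n : ℕ => ‖a n‖) atTop atTop)
    (hca : Tendsto (fun n : ℕ =>
      a (n-1) / a n - ((α ((n:ℤ)-1) / α (n:ℤ) : ℝ) : ℂ)) atTop (𝓝 0))
    (hcb : Tendsto (fun n : ℕ =>
      b n / a n - ((β (n:ℤ) / α (n:ℤ) : ℝ) : ℂ)) atTop (𝓝 0))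
    (x y : ℕ → ℝ)
    (hxsum : Summable (fun n : ℕ =>
      ‖(x (n+N) : ℂ) / a (n+N) - (x n : ℂ) / a n‖))
    (hysum : Summable (fun n : ℕ =>
      ‖(y (n+N) : ℂ) / a (n+N) - (y n : ℂ) / a n‖))
    (hx0 : Tendsto (fun n : ℕ => (x n : ℂ) / a n) atTop (𝓝 0))
    (hy0 : Tendsto (fun n : ℕ => (y n : ℂ) / a n) atTop (𝓝 0))
    (ta tb : ℕ → ℂ)
    (htaDef : ∀ n : ℕ, ta n = a n + Complex.I * (-1)^(n / N) * (x n : ℂ))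
    (htbDef : ∀ n : ℕ, tb n = b n + Complex.I * (-1)^(n / N) * (y n : ℂ)) :
    Tendsto (fun n : ℕ => ta n / (‖ta n‖ : ℂ)) atTop (𝓝 γ) ∧
    MemD1N N (fun n => ta (n-1) / ta n) ∧
    MemD1N N (fun n => tb n / ta n) ∧
    MemD1N N (fun n => γ / ta n) ∧
    Tendsto (fun n : ℕ => ‖ta n‖) atTop atTop ∧
    Tendsto (fun n : ℕ =>
      ta (n-1) / ta n - ((α ((n:ℤ)-1) / α (n:ℤ) : ℝ) : ℂ)) atTop (𝓝 0) ∧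
    Tendsto (fun n : ℕ =>
      tb n / ta n - ((β (n:ℤ) / α (n:ℤ) : ℝ) : ℂ)) atTop (𝓝 0) := by
  have ha0 : ∀ n, a n ≠ 0 := fun n h => by simpa [h] using (haRe n).2
  have hreal : ∀ (u : ℕ → ℝ) n, conj ((u n : ℂ) / a n) = (u n : ℂ) / a n := fun u n => by
    rw [map_div₀, conj_ofReal, Complex.conj_eq_iff_im.2 (haRe n).1]
  set c : ℕ → ℂ := fun n => 1 + I * (-1) ^ (n / N) * ((x n : ℂ) / a n) with hc
  have hta : ∀ n, ta n = a n * c n := fun n => by rw [htaDef, hc]; field_simp [ha0 n]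
  have hsplit : ∀ z n, z / ta n = z / a n / c n := fun z n => by rw [hta, div_mul_eq_div_div]
  have htb : ∀ n, tb n / a n = b n / a n + I * (-1) ^ (n / N) * ((y n : ℂ) / a n) :=
    fun n => by rw [htbDef, add_div, mul_div_assoc]
  have hc_ge : ∀ n, 1 ≤ ‖c n‖ :=
    fun n => one_le_norm_one_add_I_mul_neg_one_pow_mul (hreal x n) _
  have hc_lim : Tendsto c atTop (𝓝 1) := by
    simpa using (tendsto_I_mul_neg_one_pow_mul hx0 (· / N)).const_add 1
  have hc_D1 : MemD1N N c ∧ MemD1N N (fun n => c (n - 1)) := by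
    have := (memD1Stride_I_mul_neg_one_pow_mul hN (hreal x) hx0.norm.bddAbove_range
      hxsum).one_add
    exact ⟨this.memD1N hN, this.memD1N_sub_one hN⟩
  have hd_D1 := (memD1Stride_I_mul_neg_one_pow_mul hN (hreal y) hy0.norm.bddAbove_range
    hysum).memD1N hN
  refine ⟨?_, ?_, ?_, ?_, ?_, ?_, ?_⟩
  · have hc_unit : Tendsto (fun n => c n / (‖c n‖ : ℂ)) atTop (𝓝 1) := by
      simpa [Pi.div_def, Function.comp_def] using
        hc_lim.div ((continuous_ofReal.tendsto _).comp hc_lim.norm) (by simp)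
    simpa [hta, mul_div_mul_comm] using hγlim.mul hc_unit
  · simpa only [hta, mul_div_mul_comm] using hD1a.mul (hc_D1.2.div hc_D1.1 one_pos hc_ge)
  · simpa only [hsplit, htb] using (hD1b.add hd_D1).div hc_D1.1 one_pos hc_ge
  · simpa only [hsplit] using hD1g.div hc_D1.1 one_pos hc_ge
  · refine tendsto_atTop_mono (fun n => ?_) hainf
    rw [hta, norm_mul]
    exact le_mul_of_one_le_right (norm_nonneg _) (hc_ge n)
  · obtain ⟨C, hC⟩ :=
      ((Function.Periodic.sub_const hαper 1).div hαper).exists_norm_le (by omega)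
    have hq : Tendsto (fun n => c (n - 1) / c n) atTop (𝓝 1) := by
      simpa [Pi.div_def, Function.comp_def] using
        (hc_lim.comp (tendsto_sub_atTop_nat 1)).div hc_lim one_ne_zero
    simpa only [hta, mul_div_mul_comm] using
      tendsto_mul_sub_of_tendsto_sub hca ⟨C, fun n => (norm_real _).trans_le (hC n)⟩ hq
  · obtain ⟨C, hC⟩ := (Function.Periodic.div hβper hαper).exists_norm_le (by omega)
    have huv := hcb.add (tendsto_I_mul_neg_one_pow_mul hy0 (· / N))
    simp only [add_zero, sub_add_eq_add_sub, ← htb] at huv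
    simpa only [hsplit, div_eq_mul_inv (tb _ / a _)] using
      tendsto_mul_sub_of_tendsto_sub huv ⟨C, fun n => (norm_real _).trans_le (hC n)⟩
        (by simpa using hc_lim.inv₀ one_ne_zero)

open Filter Matrix Topology in
/-- Corollary 4: imaginary sign-alternating additive perturbations of real
Jacobi parameters preserve the hypotheses of Corollary 3. -/
theorem statement16
    (N : ℕ) (hN : 1 ≤ N) (γ : ℂ) (hγ : ‖γ‖ = 1)
    (α β : ℤ → ℝ) (hαper : ∀ n, α (n+N) = α n) (hβper : ∀ n, β (n+N) = β n)
    (hαpos : ∀ n, 0 < α n)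
    (a b : ℕ → ℂ)
    (haRe : ∀ n, (a n).im = 0 ∧ 0 < (a n).re) (hbRe : ∀ n, (b n).im = 0)
    (hγlim : Tendsto (fun n : ℕ => a n / (‖a n‖ : ℂ)) atTop (𝓝 γ))
    (hD1a : MemD1N N (fun n => a (n-1) / a n))
    (hD1b : MemD1N N (fun n => b n / a n))
    (hD1g : MemD1N N (fun n => γ / a n))
    (hainf : Tendsto (fun n : ℕ => ‖a n‖) atTop atTop)
    (hca : Tendsto (fun n : ℕ =>
      a (n-1) / a n - ((α ((n:ℤ)-1) / α (n:ℤ) : ℝ) : ℂ)) atTop (𝓝 0))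
    (hcb : Tendsto (fun n : ℕ =>
      b n / a n - ((β (n:ℤ) / α (n:ℤ) : ℝ) : ℂ)) atTop (𝓝 0))
    (x y : ℕ → ℝ)
    (hxsum : Summable (fun n : ℕ =>
      ‖(x (n+N) : ℂ) / a (n+N) - (x n : ℂ) / a n‖))
    (hysum : Summable (fun n : ℕ =>
      ‖(y (n+N) : ℂ) / a (n+N) - (y n : ℂ) / a n‖))
    (hx0 : Tendsto (fun n : ℕ => (x n : ℂ) / a n) atTop (𝓝 0))
    (hy0 : Tendsto (fun n : ℕ => (y n : ℂ) / a n) atTop (𝓝 0))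
    (ta tb : ℕ → ℂ)
    (htaDef : ∀ n : ℕ, ta n = a n + Complex.I * (-1)^(n / N) * (x n : ℂ))
    (htbDef : ∀ n : ℕ, tb n = b n + Complex.I * (-1)^(n / N) * (y n : ℂ)) :
    Tendsto (fun n : ℕ => ta n / (‖ta n‖ : ℂ)) atTop (𝓝 γ) ∧
    MemD1N N (fun n => ta (n-1) / ta n) ∧
    MemD1N N (fun n => tb n / ta n) ∧
    MemD1N N (fun n => γ / ta n) ∧
    Tendsto (fun n : ℕ => ‖ta n‖) atTop atTop ∧
    Tendsto (fun n : ℕ =>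
      ta (n-1) / ta n - ((α ((n:ℤ)-1) / α (n:ℤ) : ℝ) : ℂ)) atTop (𝓝 0) ∧
    Tendsto (fun n : ℕ =>
      tb n / ta n - ((β (n:ℤ) / α (n:ℤ) : ℝ) : ℂ)) atTop (𝓝 0) :=
  statement16_general N hN γ α β hαper hβper a b haRe hγlim hD1a hD1b hD1g hainf hca hcb x y hxsum
    hysum hx0 hy0 ta tb htaDef htbDef
end

section
/- Let N be a positive integer, i ∈ {0, 1, …, N−1} and K ⊂ ℂ compact. Suppose (X_{nN+i} : n ≥ 1) ∈ D̃₁(K, GL(2, ℂ)) and lim_{n→∞} a_{nN+i−1}/a_{(n+1)N+i−1} = 1. Then the sequence ((a_{(n+1)N+i−1}/a_{nN+i−1})·X_{nN+i} : n ≥ 1) also belongs to D̃₁(K, GL(2, ℂ)). (Here one uses that det X_{nN+i}(z) = a_{nN+i−1}/a_{(n+1)N+i−1} for every z.) -/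
open Filter Matrix Topology

/-! The transfer matrix `X_n` has determinant `a_{n-1}/a_{n+N-1}`, so the rescaling factor
`c_n = a_{(n+1)N+i-1}/a_{nN+i-1}` is `(det X_{nN+i})⁻¹`. Writing
`c_{n+1} - c̄_n = -c_{n+1} c̄_n (det X_{n+1} - det X̄_n)` and using that the determinant is
locally Lipschitz, the scalars inherit the summable twisted variation of the matrices, and
`c_n → 1` keeps them bounded. -/

open scoped Matrix.Norms.L2Operator

namespace Matrix

theorem norm_entry_le_l2_opNorm {𝕜 m n : Type*} [RCLike 𝕜] [Fintype m] [Fintype n]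
    [DecidableEq n] (A : Matrix m n 𝕜) (i : m) (j : n) : ‖A i j‖ ≤ ‖A‖ := by
  set x : EuclideanSpace 𝕜 n := EuclideanSpace.single j 1
  have hcol : (EuclideanSpace.equiv m 𝕜).symm (A *ᵥ x.ofLp) i = A i j := by
    simp [x, mulVec_single]
  calc ‖A i j‖ ≤ ‖(EuclideanSpace.equiv m 𝕜).symm (A *ᵥ x.ofLp)‖ := hcol ▸ PiLp.norm_apply_le _ i
    _ ≤ ‖A‖ * ‖x‖ := A.l2_opNorm_mulVec x
    _ = ‖A‖ := by simp [x]

theorem norm_det_sub_det_le_fin_two {𝕜 : Type*} [RCLike 𝕜] (A B : Matrix (Fin 2) (Fin 2) 𝕜) :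
    ‖A.det - B.det‖ ≤ 2 * (‖A‖ + ‖B‖) * ‖A - B‖ := by
  have hA := A.norm_entry_le_l2_opNorm
  have hB := B.norm_entry_le_l2_opNorm
  have hAB : ∀ p q, ‖A p q - B p q‖ ≤ ‖A - B‖ := (A - B).norm_entry_le_l2_opNorm
  have hdet : A.det - B.det = A 0 0 * (A 1 1 - B 1 1) + (A 0 0 - B 0 0) * B 1 1
      - (A 0 1 * (A 1 0 - B 1 0) + (A 0 1 - B 0 1) * B 1 0) := by
    simp only [det_fin_two]; ring
  calc ‖A.det - B.det‖
      ≤ ‖A 0 0‖ * ‖A 1 1 - B 1 1‖ + ‖A 0 0 - B 0 0‖ * ‖B 1 1‖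
        + (‖A 0 1‖ * ‖A 1 0 - B 1 0‖ + ‖A 0 1 - B 0 1‖ * ‖B 1 0‖) := by
        rw [hdet]
        refine (norm_sub_le _ _).trans (add_le_add ?_ ?_) <;>
          exact (norm_add_le _ _).trans (add_le_add (norm_mul_le _ _) (norm_mul_le _ _))
    _ ≤ ‖A‖ * ‖A - B‖ + ‖A - B‖ * ‖B‖ + (‖A‖ * ‖A - B‖ + ‖A - B‖ * ‖B‖) := by
        gcongr <;> first | exact hA _ _ | exact hB _ _ | exact hAB _ _
    _ = 2 * (‖A‖ + ‖B‖) * ‖A - B‖ := by ring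

end Matrix

theorem opNorm_eq_norm (X : Matrix (Fin 2) (Fin 2) ℂ) : opNorm X = ‖X‖ := rfl

theorem det_mconj (X : Matrix (Fin 2) (Fin 2) ℂ) : (mconj X).det = starRingEnd ℂ X.det :=
  ((starRingEnd ℂ).map_det X).symm

theorem mconj_smul (c : ℂ) (X : Matrix (Fin 2) (Fin 2) ℂ) :
    mconj (c • X) = starRingEnd ℂ c • mconj X := by
  ext p q
  simp [mconj]

theorem det_Bmat (a b : ℕ → ℂ) (j : ℕ) (z : ℂ) : (Bmat a b j z).det = a (j - 1) / a j := by
  simp [Bmat, det_fin_two_of]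

theorem transfer_succ (a b : ℕ → ℂ) (N n : ℕ) (z : ℂ) :
    transfer a b (N + 1) n z = Bmat a b (n + N) z * transfer a b N n z := by
  simp [transfer, List.range_succ]

theorem det_transfer {a : ℕ → ℂ} (ha : ∀ n, a n ≠ 0) (b : ℕ → ℂ) (N n : ℕ) (z : ℂ) :
    (transfer a b N n z).det = a (n - 1) / a (n + N - 1) := by
  induction N with
  | zero => simp [transfer, ha]
  | succ N ih =>
    rw [transfer_succ, det_mul, det_Bmat, ih, show n + (N + 1) - 1 = n + N by omega]
    field_simp [ha]

theorem norm_sub_conj_le_of_det_eq_inv {x y : ℂ} (hx : x ≠ 0) (hy : y ≠ 0)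
    {A B : Matrix (Fin 2) (Fin 2) ℂ} (hA : A.det = x⁻¹) (hB : B.det = y⁻¹) :
    ‖x - starRingEnd ℂ y‖ ≤ ‖x‖ * ‖y‖ * (2 * (‖A‖ + ‖mconj B‖) * ‖A - mconj B‖) := by
  have hy' : starRingEnd ℂ y ≠ 0 := (map_ne_zero _).mpr hy
  have key : x - starRingEnd ℂ y = -(x * starRingEnd ℂ y) * (A.det - (mconj B).det) := by
    rw [det_mconj, hA, hB, map_inv₀]
    field_simp
    ring
  rw [key, norm_mul, norm_neg, norm_mul, Complex.norm_conj]
  gcongr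
  exact norm_det_sub_det_le_fin_two _ _

theorem norm_smul_sub_mconj_smul_le (x y : ℂ) (A B : Matrix (Fin 2) (Fin 2) ℂ) :
    ‖x • A - mconj (y • B)‖ ≤ ‖x‖ * ‖A - mconj B‖ + ‖x - starRingEnd ℂ y‖ * ‖mconj B‖ := by
  have split : x • A - mconj (y • B) = x • (A - mconj B) + (x - starRingEnd ℂ y) • mconj B := by
    rw [mconj_smul, smul_sub, sub_smul]
    abel
  rw [split, ← norm_smul, ← norm_smul]
  exact norm_add_le _ _

theorem MemD1K.smul_of_det_eq_inv {K : Set ℂ} {Y : ℕ → ℂ → Matrix (Fin 2) (Fin 2) ℂ}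
    (hY : MemD1K K Y) {c : ℕ → ℂ} (hc : ∀ n, c n ≠ 0) (hbdd : ∃ D, ∀ n, ‖c n‖ ≤ D)
    (hdet : ∀ n, 1 ≤ n → ∀ z ∈ K, (Y n z).det = (c n)⁻¹) :
    MemD1K K (fun n z => c n • Y n z) := by
  obtain ⟨hcont, hunit, ⟨C, hC⟩, ⟨g, hg, hgY⟩⟩ := hY
  obtain ⟨D, hD⟩ := hbdd
  obtain ⟨G, hG⟩ := hg.tendsto_atTop_zero.bddAbove_range
  have hD0 : 0 ≤ D := (norm_nonneg _).trans (hD 0)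
  refine ⟨fun n hn => (hcont n hn).const_smul (c n), fun n hn z hz => ?_, ⟨D * C, ?_⟩,
    ⟨fun n => (D + D * D * (2 * (C + (C + G))) * (C + G)) * g n, hg.mul_left _, ?_⟩⟩
  · rw [isUnit_iff_isUnit_det, det_smul]
    exact ((hc n).isUnit.pow _).mul ((isUnit_iff_isUnit_det _).mp (hunit n hn z hz))
  · intro n hn z hz
    rw [opNorm_eq_norm, norm_smul]
    exact mul_le_mul (hD n) (hC n hn z hz) (norm_nonneg _) hD0
  · intro n hn z hz
    simp only [opNorm_eq_norm] at hC hgY ⊢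
    have hA : ‖Y (n + 1) z‖ ≤ C := hC (n + 1) (by omega) z hz
    have hAB : ‖Y (n + 1) z - mconj (Y n z)‖ ≤ g n := hgY n hn z hz
    have hg0 : 0 ≤ g n := (norm_nonneg _).trans hAB
    have hB : ‖mconj (Y n z)‖ ≤ C + G := by
      calc ‖mconj (Y n z)‖ ≤ ‖Y (n + 1) z‖ + ‖Y (n + 1) z - mconj (Y n z)‖ :=
            norm_le_norm_add_norm_sub _ _
        _ ≤ C + G := add_le_add hA (hAB.trans (hG ⟨n, rfl⟩))
    have hCG : 0 ≤ 2 * (C + (C + G)) := by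
      linarith [norm_nonneg (Y (n + 1) z), norm_nonneg (mconj (Y n z))]
    have hscal : ‖c (n + 1) - starRingEnd ℂ (c n)‖ ≤ D * D * (2 * (C + (C + G)) * g n) :=
      calc ‖c (n + 1) - starRingEnd ℂ (c n)‖
          ≤ ‖c (n + 1)‖ * ‖c n‖ * (2 * (‖Y (n + 1) z‖ + ‖mconj (Y n z)‖)
              * ‖Y (n + 1) z - mconj (Y n z)‖) :=
            norm_sub_conj_le_of_det_eq_inv (hc _) (hc _) (hdet _ (by omega) z hz) (hdet n hn z hz)
        _ ≤ D * D * (2 * (C + (C + G)) * g n) := by gcongr <;> exact hD _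
    calc ‖c (n + 1) • Y (n + 1) z - mconj (c n • Y n z)‖
        ≤ ‖c (n + 1)‖ * ‖Y (n + 1) z - mconj (Y n z)‖
          + ‖c (n + 1) - starRingEnd ℂ (c n)‖ * ‖mconj (Y n z)‖ :=
          norm_smul_sub_mconj_smul_le _ _ _ _
      _ ≤ D * g n + D * D * (2 * (C + (C + G)) * g n) * (C + G) := by
          gcongr
          exact hD _
      _ = (D + D * D * (2 * (C + (C + G))) * (C + G)) * g n := by ring

open Filter Matrix Topology in
theorem statement19_general
    (a b : ℕ → ℂ) (ha : ∀ n, a n ≠ 0)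
    (N : ℕ) (i : ℕ)
    (K : Set ℂ)
    (hD1 : MemD1K K (fun n z => transfer a b N (n*N+i) z))
    (hratio : Tendsto (fun n : ℕ => a (n*N+i-1) / a ((n+1)*N+i-1)) atTop (𝓝 1)) :
    MemD1K K (fun n z =>
      (a ((n+1)*N+i-1) / a (n*N+i-1)) • transfer a b N (n*N+i) z) := by
  have hdet (n : ℕ) (z : ℂ) : (transfer a b N (n*N+i) z).det
      = (a ((n+1)*N+i-1) / a (n*N+i-1))⁻¹ := by
    rw [det_transfer ha, inv_div, show n*N+i+N-1 = (n+1)*N+i-1 by ring_nf]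
  have hlim : Tendsto (fun n : ℕ => a ((n+1)*N+i-1) / a (n*N+i-1)) atTop (𝓝 1) := by
    simpa using hratio.inv₀ one_ne_zero
  obtain ⟨D, hD⟩ := hlim.norm.bddAbove_range
  exact hD1.smul_of_det_eq_inv (fun n => div_ne_zero (ha _) (ha _))
    ⟨D, fun n => hD ⟨n, rfl⟩⟩ (fun n _ z _ => hdet n z)

open Filter Matrix Topology in
/-- From the proof of Theorem A: the rescaled transfer matrices stay in the
twisted Stolz class. -/
theorem statement19
    (a b : ℕ → ℂ) (ha : ∀ n, a n ≠ 0)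
    (N : ℕ) (hN : 1 ≤ N) (i : ℕ) (hi : i < N)
    (K : Set ℂ) (hK : IsCompact K)
    (hD1 : MemD1K K (fun n z => transfer a b N (n*N+i) z))
    (hratio : Tendsto (fun n : ℕ => a (n*N+i-1) / a ((n+1)*N+i-1)) atTop (𝓝 1)) :
    MemD1K K (fun n z =>
      (a ((n+1)*N+i-1) / a (n*N+i-1)) • transfer a b N (n*N+i) z) :=
  statement19_general a b ha N i K hD1 hratio
end
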